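/- arXiv:1807.05834 — 2 statements merged into one kernel-verified Lean document; each statement's English description precedes it below -/
import Mathlib

section
/- Let p₁, …, p_P be points in ℝⁿ and for each i let g_i : ℝ≥0 → ℝ be a monotonically nondecreasing function (interpreted as g_i(r) = -log p(m_i | r)). Define f(q) = Σ_i g_i(‖p_i - q‖). Then f attains its infimum over ℝⁿ at some point of the convex hull of {p₁, …, p_P}; more precisely, for every q ∉ conv{p₁,…,p_P}, the metric projection q' of q onto the convex hull satisfies f(q') ≤ f(q). -/
/-!
The metric projection `q'` of `q` onto a convex set `K` sees every `w ∈ K` at an obtuse angle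
from `q`, i.e. `⟪q - q', w - q'⟫ ≤ 0`; hence `‖w - q'‖ ≤ ‖w - q‖` by the law of cosines.
Applied to the points `p i ∈ conv{p}`, projecting decreases every distance `‖p i - q‖`, and so,
by monotonicity, every summand `g i ‖p i - q‖`.
-/

open scoped RealInnerProductSpace

section

variable {F : Type*} [NormedAddCommGroup F] [InnerProductSpace ℝ F]

theorem dist_le_dist_of_real_inner_le_zero {u v w : F} (h : ⟪u - v, w - v⟫ ≤ 0) :
    dist w v ≤ dist w u := by
  have law_of_cosines : ‖w - u‖ ^ 2 = ‖w - v‖ ^ 2 - 2 * ⟪w - v, u - v⟫ + ‖u - v‖ ^ 2 := by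
    rw [← norm_sub_sq_real, sub_sub_sub_cancel_right]
  rw [real_inner_comm] at h
  rw [dist_eq_norm, dist_eq_norm, ← sq_le_sq₀ (norm_nonneg _) (norm_nonneg _), law_of_cosines]
  linarith [sq_nonneg ‖u - v‖]

theorem Convex.real_inner_le_zero_of_forall_dist_le {K : Set F} (hK : Convex ℝ K) {u v : F}
    (hv : v ∈ K) (hmin : ∀ x ∈ K, dist u v ≤ dist u x) : ∀ w ∈ K, ⟪u - v, w - v⟫ ≤ 0 := by
  have : Nonempty K := ⟨⟨v, hv⟩⟩
  refine (norm_eq_iInf_iff_real_inner_le_zero hK hv).1 (le_antisymm ?_ ?_)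
  · exact le_ciInf fun w => by simpa only [dist_eq_norm] using hmin w w.2
  · exact ciInf_le ⟨0, by rintro _ ⟨w, rfl⟩; exact norm_nonneg _⟩ (⟨v, hv⟩ : K)

theorem Convex.dist_le_dist_of_forall_dist_le {K : Set F} (hK : Convex ℝ K) {u v w : F}
    (hv : v ∈ K) (hmin : ∀ x ∈ K, dist u v ≤ dist u x) (hw : w ∈ K) : dist w v ≤ dist w u :=
  dist_le_dist_of_real_inner_le_zero (hK.real_inner_le_zero_of_forall_dist_le hv hmin w hw)

end

theorem stmt_3 {n P : ℕ} (p : Fin P → EuclideanSpace ℝ (Fin n))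
    (g : Fin P → NNReal → ℝ) (hg : ∀ i, Monotone (g i)) :
    ∀ q ∉ convexHull ℝ (Set.range p),
      ∀ q' ∈ convexHull ℝ (Set.range p),
        (∀ x ∈ convexHull ℝ (Set.range p), dist q q' ≤ dist q x) →
        (∑ i, g i ‖p i - q'‖₊) ≤ ∑ i, g i ‖p i - q‖₊ := by
  intro q _ q' hq' hmin
  refine Finset.sum_le_sum fun i _ => hg i ?_
  have hpi : p i ∈ convexHull ℝ (Set.range p) := subset_convexHull ℝ _ ⟨i, rfl⟩
  have := (convex_convexHull ℝ _).dist_le_dist_of_forall_dist_le hq' hmin hpi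
  rwa [← nndist_eq_nnnorm, ← nndist_eq_nnnorm, ← NNReal.coe_le_coe, coe_nndist, coe_nndist]
end

section
/- Let p₁, …, p_P ∈ ℝⁿ and g_i : ℝ≥0 → ℝ strictly increasing functions. Define f(q) = Σ_i g_i(‖p_i - q‖). If q* minimizes f over ℝⁿ, then q* lies in the convex hull of {p₁, …, p_P}. -/
/-!
If `q` lies outside the compact convex hull `K` of the points, its nearest point `v` in `K`
satisfies `⟪q - v, w - v⟫ ≤ 0` for every `w ∈ K`, so `v` is strictly closer than `q` to every
point of `K`, in particular to every `pᵢ`. Since each `gᵢ` is strictly increasing, moving from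
`q` to `v` strictly decreases every summand, so `q` is not a minimizer.
-/

open scoped InnerProductSpace

variable {F : Type*} [NormedAddCommGroup F] [InnerProductSpace ℝ F]

theorem norm_sub_lt_norm_sub_of_inner_nonpos {q v w : F} (hqv : q ≠ v)
    (h : ⟪q - v, w - v⟫_ℝ ≤ 0) : ‖w - v‖ < ‖w - q‖ := by
  have hpos : 0 < ‖q - v‖ ^ 2 := by positivity [sub_ne_zero.mpr hqv]
  have hsq : ‖w - q‖ ^ 2 = ‖w - v‖ ^ 2 - 2 * ⟪w - v, q - v⟫_ℝ + ‖q - v‖ ^ 2 := by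
    rw [← norm_sub_sq_real, sub_sub_sub_cancel_right]
  rw [real_inner_comm] at h
  exact lt_of_pow_lt_pow_left₀ 2 (norm_nonneg _) (by linarith)

theorem Convex.exists_forall_norm_sub_lt_of_notMem {K : Set F} (hconv : Convex ℝ K)
    (hne : K.Nonempty) (hcomplete : IsComplete K) {q : F} (hq : q ∉ K) :
    ∃ v ∈ K, ∀ w ∈ K, ‖w - v‖ < ‖w - q‖ := by
  obtain ⟨v, hvK, hv⟩ := exists_norm_eq_iInf_of_complete_convex hne hcomplete hconv q
  have hinner := (norm_eq_iInf_iff_real_inner_le_zero hconv hvK).mp hv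
  have hqv : q ≠ v := fun h ↦ hq (h ▸ hvK)
  exact ⟨v, hvK, fun w hw ↦ norm_sub_lt_norm_sub_of_inner_nonpos hqv (hinner w hw)⟩

theorem exists_sum_lt_of_notMem_convexHull {ι β : Type*} [Fintype ι] [Nonempty ι]
    [AddCommMonoid β] [PartialOrder β] [IsOrderedCancelAddMonoid β]
    {p : ι → F} {g : ι → NNReal → β} (hg : ∀ i, StrictMono (g i)) {q : F}
    (hq : q ∉ convexHull ℝ (Set.range p)) :
    ∃ v, ∑ i, g i ‖p i - v‖₊ < ∑ i, g i ‖p i - q‖₊ := by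
  have hne : (convexHull ℝ (Set.range p)).Nonempty :=
    (Set.range_nonempty p).convexHull (𝕜 := ℝ)
  have hcomplete : IsComplete (convexHull ℝ (Set.range p)) :=
    ((Set.finite_range p).isCompact_convexHull (𝕜 := ℝ)).isComplete
  obtain ⟨v, -, hv⟩ :=
    (convex_convexHull ℝ _).exists_forall_norm_sub_lt_of_notMem hne hcomplete hq
  refine ⟨v, Finset.sum_lt_sum_of_nonempty Finset.univ_nonempty fun i _ ↦ hg i ?_⟩
  exact hv _ (subset_convexHull ℝ _ (Set.mem_range_self i))

theorem stmt_4 {n P : ℕ} (hP : 0 < P) (p : Fin P → EuclideanSpace ℝ (Fin n))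
    (g : Fin P → NNReal → ℝ) (hg : ∀ i, StrictMono (g i))
    (q : EuclideanSpace ℝ (Fin n))
    (hq : ∀ x, (∑ i, g i ‖p i - q‖₊) ≤ ∑ i, g i ‖p i - x‖₊) :
    q ∈ convexHull ℝ (Set.range p) := by
  have : Nonempty (Fin P) := ⟨⟨0, hP⟩⟩
  by_contra hqK
  obtain ⟨v, hv⟩ := exists_sum_lt_of_notMem_convexHull hg hqK
  exact (hq v).not_gt hv
end
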